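/- arXiv:0908.3330 — 2 statements merged into one kernel-verified Lean document; each statement's English description precedes it below -/
import Mathlib

section
/- For i ∉ S and 0 ≤ l ≤ p ≤ a_i, there is a bijection between (a_1,…,a_i,…,a_k,S)-permutations with exactly p fixed points in A_i and (a_1,…,a_i−l,…,a_k,S)-permutations with exactly p−l fixed points in A_i. -/
/-- Apply a permutation of `Fin n` to a natural number (0-based indexing);
indices `≥ n` are left fixed. -/
def appl {n : ℕ} (π : Equiv.Perm (Fin n)) (j : ℕ) : ℕ :=
  if h : j < n then ((π ⟨j, h⟩ : Fin n) : ℕ) else j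

/-- The starting index (0-based) of the `i`-th consecutive block when
`{0,…,n-1}` is partitioned into blocks of sizes `a 0, …, a (k-1)`. -/
def blockStart {k : ℕ} (a : Fin k → ℕ) (i : Fin k) : ℕ := ∑ t ∈ Finset.Iio i, a t

/-- `x` lies in the `i`-th block. -/
def inBlock {k : ℕ} (a : Fin k → ℕ) (i : Fin k) (x : ℕ) : Prop :=
  blockStart a i ≤ x ∧ x < blockStart a i + a i

instance {k : ℕ} (a : Fin k → ℕ) (i : Fin k) : DecidablePred (inBlock a i) := fun x =>
  inferInstanceAs (Decidable (blockStart a i ≤ x ∧ x < blockStart a i + a i))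

/-- An `(a₁,…,a_k,S)`-permutation: a permutation of `{0,…,n-1}` (where `n = ∑ aᵢ`)
that is strictly decreasing on each block `Aᵢ` with `i ∈ S` and strictly
increasing on each block `Aᵢ` with `i ∉ S`. -/
def IsASPerm {k : ℕ} (a : Fin k → ℕ) (S : Finset (Fin k))
    (π : Equiv.Perm (Fin (∑ t, a t))) : Prop :=
  ∀ i : Fin k, ∀ j : ℕ, blockStart a i ≤ j → j + 1 < blockStart a i + a i →
    if i ∈ S then appl π (j + 1) < appl π j else appl π j < appl π (j + 1)

/-- The number of fixed points of `π` lying in block `i`. -/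
noncomputable def fixInBlock {k : ℕ} (a : Fin k → ℕ) (i : Fin k)
    (π : Equiv.Perm (Fin (∑ t, a t))) : ℕ :=
  Nat.card {x : ℕ // inBlock a i x ∧ appl π x = x}

/-!
On an ascending block the excess `π x - x` is non-decreasing (`π (x + 1) ≥ π x + 1`), so the
block splits into an initial run where `π x < x`, a run `[s, s + p)` of fixed points, and a
final run where `π x > x`; in particular `s` is the first position with `π x ≥ x`. Deleting the
`l` fixed points `s, …, s + l - 1` and closing the gap keeps every block monotone in the same
direction and leaves a block of the same shape, still starting its fixed points at `s`, with
`p - l` of them. Conversely `s` can be read off the shorter permutation, and re-inserting `l`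
fixed points there inverts the deletion.
-/

open Function Equiv Equiv.Perm

section Gap

def openGap (s l y : ℕ) : ℕ := if y < s then y else y + l

def closeGap (s l x : ℕ) : ℕ := if x < s then x else x - l

variable {s l : ℕ}

theorem openGap_of_lt {y : ℕ} (h : y < s) : openGap s l y = y := if_pos h

theorem openGap_of_le {y : ℕ} (h : s ≤ y) : openGap s l y = y + l := if_neg (by omega)

theorem closeGap_of_lt {x : ℕ} (h : x < s) : closeGap s l x = x := if_pos h

theorem closeGap_of_le {x : ℕ} (h : s ≤ x) : closeGap s l x = x - l := if_neg (by omega)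

theorem closeGap_openGap (y : ℕ) : closeGap s l (openGap s l y) = y := by
  unfold openGap closeGap; split_ifs <;> omega

theorem openGap_closeGap {x : ℕ} (h : ¬ (s ≤ x ∧ x < s + l)) :
    openGap s l (closeGap s l x) = x := by
  unfold openGap closeGap; split_ifs <;> omega

theorem openGap_notMem (y : ℕ) : ¬ (s ≤ openGap s l y ∧ openGap s l y < s + l) := by
  unfold openGap; split_ifs <;> omega

theorem openGap_strictMono : StrictMono (openGap s l) := by
  intro y y' h; unfold openGap; split_ifs <;> omega

theorem closeGap_lt_closeGap {x x' : ℕ} (h : x < x') (hx : ¬ (s ≤ x ∧ x < s + l))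
    (hx' : ¬ (s ≤ x' ∧ x' < s + l)) : closeGap s l x < closeGap s l x' := by
  unfold closeGap; split_ifs <;> omega

end Gap

section Splice

def gapEquiv {n N s l : ℕ} (hn : n + l = N) (hs : s ≤ n) :
    Fin n ≃ {x : Fin N // ¬ (s ≤ x.val ∧ x.val < s + l)} where
  toFun y := ⟨⟨openGap s l y, by unfold openGap; split_ifs <;> omega⟩, openGap_notMem _⟩
  invFun x := ⟨closeGap s l x.1, by
    have := x.1.2; have := x.2; unfold closeGap; split_ifs <;> omega⟩
  left_inv y := Fin.ext (closeGap_openGap _)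
  right_inv x := Subtype.ext (Fin.ext (openGap_closeGap x.2))

/-- Extend `σ` to `Fin N` by inserting `l` fixed points at `s, …, s + l - 1` (junk `1` if
`n < s`). -/
def insertFixed {n N : ℕ} (s l : ℕ) (hn : n + l = N) (σ : Perm (Fin n)) : Perm (Fin N) :=
  if hs : s ≤ n then ofSubtype (α := Fin N) ((gapEquiv hn hs).permCongr σ) else 1

open Classical in
/-- Remove the fixed points `s, …, s + l - 1` of `π` and close the gap (junk `1` if `n < s` or
these points are not all fixed). -/
noncomputable def deleteFixed {n N : ℕ} (s l : ℕ) (hn : n + l = N) (π : Perm (Fin N)) :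
    Perm (Fin n) :=
  if h : s ≤ n ∧ ∀ u, s ≤ u → u < s + l → appl π u = u then
    (gapEquiv hn h.1).symm.permCongr (π.subtypePerm fun x => by
      have hfix : ∀ x : Fin N, s ≤ x.val → x.val < s + l → π x = x := fun x h1 h2 =>
        Fin.ext (by simpa [appl] using h.2 x h1 h2)
      refine not_congr ⟨fun hπx => ?_, fun hx => by rwa [hfix x hx.1 hx.2]⟩
      rwa [← π.injective (hfix (π x) hπx.1 hπx.2)])
  else 1

variable {n N s l : ℕ}

theorem appl_insertFixed_of_mem (hn : n + l = N) (σ : Perm (Fin n)) {x : ℕ} (h1 : s ≤ x)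
    (h2 : x < s + l) : appl (insertFixed s l hn σ) x = x := by
  unfold insertFixed appl
  split_ifs with hx hs
  · rw [ofSubtype_apply_of_not_mem ((gapEquiv hn hs).permCongr σ) (not_not.mpr ⟨h1, h2⟩)]
  all_goals rfl

theorem appl_insertFixed_of_notMem (hn : n + l = N) (hs : s ≤ n) (σ : Perm (Fin n)) {x : ℕ}
    (hx : x < N) (hgap : ¬ (s ≤ x ∧ x < s + l)) :
    appl (insertFixed s l hn σ) x = openGap s l (appl σ (closeGap s l x)) := by
  have hc : closeGap s l x < n := ((gapEquiv hn hs).symm ⟨⟨x, hx⟩, hgap⟩).2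
  rw [insertFixed, dif_pos hs, appl, dif_pos hx,
    ofSubtype_apply_of_mem ((gapEquiv hn hs).permCongr σ) hgap, appl, dif_pos hc]
  rfl

theorem insertFixed_injective (hn : n + l = N) (hs : s ≤ n) :
    Injective (insertFixed s l hn) := by
  intro σ τ h
  simp only [insertFixed, dif_pos hs] at h
  exact (gapEquiv hn hs).permCongr.injective (ofSubtype_injective h)

theorem insertFixed_deleteFixed (hn : n + l = N) (hs : s ≤ n) {π : Perm (Fin N)}
    (hfix : ∀ u, s ≤ u → u < s + l → appl π u = u) :
    insertFixed s l hn (deleteFixed s l hn π) = π := by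
  rw [deleteFixed, dif_pos ⟨hs, hfix⟩, insertFixed, dif_pos hs, ← permCongr_symm,
    apply_symm_apply]
  refine ofSubtype_subtypePerm _ fun x hx hgap => hx (Fin.ext ?_)
  simpa [appl] using hfix x hgap.1 hgap.2

theorem deleteFixed_insertFixed (hn : n + l = N) (hs : s ≤ n) (σ : Perm (Fin n)) :
    deleteFixed s l hn (insertFixed s l hn σ) = σ :=
  insertFixed_injective hn hs
    (insertFixed_deleteFixed hn hs fun _ h1 h2 => appl_insertFixed_of_mem hn σ h1 h2)

theorem openGap_appl_deleteFixed (hn : n + l = N) (hs : s ≤ n) {π : Perm (Fin N)}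
    (hfix : ∀ u, s ≤ u → u < s + l → appl π u = u) {y : ℕ} (hy : y < n) :
    openGap s l (appl (deleteFixed s l hn π) y) = appl π (openGap s l y) := by
  have hyN : openGap s l y < N := (gapEquiv hn hs ⟨y, hy⟩).1.2
  conv_rhs => rw [← insertFixed_deleteFixed hn hs hfix]
  rw [appl_insertFixed_of_notMem hn hs _ hyN (openGap_notMem y), closeGap_openGap]

end Splice

section Blocks

variable {k : ℕ} (a : Fin k → ℕ)

theorem blockStart_add_le_sum (i : Fin k) : blockStart a i + a i ≤ ∑ t, a t := by
  rw [blockStart, add_comm, ← Finset.sum_insert (by simp)]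
  exact Finset.sum_le_sum_of_subset (Finset.subset_univ _)

theorem blockStart_add_le_of_lt {i j : Fin k} (h : j < i) :
    blockStart a j + a j ≤ blockStart a i := by
  rw [blockStart, add_comm, ← Finset.sum_insert (by simp)]
  exact Finset.sum_le_sum_of_subset fun t ht => by
    simp only [Finset.mem_insert, Finset.mem_Iio] at ht ⊢
    rcases ht with rfl | ht
    exacts [h, ht.trans h]

theorem eq_of_inBlock {i j : Fin k} {x : ℕ} (hj : inBlock a j x) (hi : inBlock a i x) : j = i := by
  by_contra hne
  rcases lt_or_gt_of_ne hne with h | h <;>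
  · have := blockStart_add_le_of_lt a h; unfold inBlock at *; omega

variable {a} {i : Fin k} {l : ℕ}

theorem blockStart_update_of_le (v : ℕ) {j : Fin k} (h : j ≤ i) :
    blockStart (update a i v) j = blockStart a j :=
  Finset.sum_congr rfl fun _ ht => update_of_ne (Finset.mem_Iio.mp ht |>.trans_le h).ne v a

theorem blockStart_update_sub_add (hl : l ≤ a i) {j : Fin k} (h : i < j) :
    blockStart (update a i (a i - l)) j + l = blockStart a j := by
  have hi : i ∈ Finset.Iio j := Finset.mem_Iio.mpr h
  rw [blockStart, Finset.sum_update_of_mem hi, ← Finset.erase_eq, blockStart,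
    ← Finset.sum_erase_add _ _ hi]
  omega

theorem sum_update_sub_add (hl : l ≤ a i) : ∑ t, update a i (a i - l) t + l = ∑ t, a t := by
  rw [Finset.sum_update_of_mem (Finset.mem_univ i), ← Finset.erase_eq,
    ← Finset.sum_erase_add _ _ (Finset.mem_univ i)]
  omega

variable {s : ℕ}

theorem inBlock_openGap (hl : l ≤ a i) (hbs : blockStart a i ≤ s)
    (hs : s + l ≤ blockStart a i + a i) {j : Fin k} {y : ℕ}
    (hy : inBlock (update a i (a i - l)) j y) : inBlock a j (openGap s l y) := by
  unfold inBlock at *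
  rcases lt_trichotomy j i with h | rfl | h
  · have := blockStart_add_le_of_lt a h
    rw [blockStart_update_of_le _ h.le, update_of_ne h.ne] at hy
    rw [openGap_of_lt (by omega)]; omega
  · rw [blockStart_update_of_le _ le_rfl, update_self] at hy
    unfold openGap; split_ifs <;> omega
  · have := blockStart_add_le_of_lt a h
    have := blockStart_update_sub_add hl h
    rw [update_of_ne h.ne'] at hy
    rw [openGap_of_le (by omega)]; omega

theorem inBlock_closeGap (hl : l ≤ a i) (hbs : blockStart a i ≤ s)
    (hs : s + l ≤ blockStart a i + a i) {j : Fin k} {x : ℕ} (hx : inBlock a j x)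
    (hgap : ¬ (s ≤ x ∧ x < s + l)) : inBlock (update a i (a i - l)) j (closeGap s l x) := by
  unfold inBlock at *
  rcases lt_trichotomy j i with h | rfl | h
  · have := blockStart_add_le_of_lt a h
    rw [blockStart_update_of_le _ h.le, update_of_ne h.ne, closeGap_of_lt (by omega)]; omega
  · rw [blockStart_update_of_le _ le_rfl, update_self]
    unfold closeGap; split_ifs <;> omega
  · have := blockStart_add_le_of_lt a h
    have := blockStart_update_sub_add hl h
    rw [update_of_ne h.ne', closeGap_of_le (by omega)]; omega

end Blocks

section Profile

variable {k N : ℕ} {a : Fin k → ℕ} {S : Finset (Fin k)} {i : Fin k}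

theorem IsASPerm.ite_lt_of_lt {π : Perm (Fin (∑ t, a t))} (hπ : IsASPerm a S π) (j : Fin k)
    {x y : ℕ} (hx : blockStart a j ≤ x) (hxy : x < y) (hy : y < blockStart a j + a j) :
    if j ∈ S then appl π y < appl π x else appl π x < appl π y := by
  induction y, hxy using Nat.le_induction with
  | base => exact hπ j x hx hy
  | succ y hxy ih =>
    have h := hπ j y (by omega) hy
    have ih := ih (by omega)
    split_ifs at h ih ⊢ <;> omega

theorem IsASPerm.add_sub_le {π : Perm (Fin (∑ t, a t))} (hπ : IsASPerm a S π) (hi : i ∉ S)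
    {x y : ℕ} (hx : blockStart a i ≤ x) (hxy : x ≤ y) (hy : y < blockStart a i + a i) :
    appl π x + (y - x) ≤ appl π y := by
  induction y, hxy using Nat.le_induction with
  | base => omega
  | succ y hxy ih =>
    have h := hπ i y (by omega) hy
    rw [if_neg hi] at h
    have := ih (by omega)
    omega

/-- The first position of block `i` satisfying `P`, or the end of the block if there is none. -/
noncomputable def blockCut (a : Fin k → ℕ) (i : Fin k) (P : ℕ → Prop) : ℕ :=
  sInf ({x | inBlock a i x ∧ P x} ∪ {blockStart a i + a i})

variable {P : ℕ → Prop}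

theorem blockCut_mem : blockCut a i P ∈ ({x | inBlock a i x ∧ P x} ∪ {blockStart a i + a i}) :=
  Nat.sInf_mem ⟨_, Or.inr rfl⟩

theorem blockStart_le_blockCut : blockStart a i ≤ blockCut a i P := by
  rcases blockCut_mem (a := a) (i := i) (P := P) with h | h
  · exact h.1.1
  · rw [Set.mem_singleton_iff.mp h]; omega

theorem blockCut_le : blockCut a i P ≤ blockStart a i + a i := Nat.sInf_le (Or.inr rfl)

theorem blockCut_le_iff
    (hP : ∀ x y, blockStart a i ≤ x → x ≤ y → y < blockStart a i + a i → P x → P y) {x : ℕ}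
    (hx : inBlock a i x) : blockCut a i P ≤ x ↔ P x := by
  refine ⟨fun hcut => ?_, fun h => Nat.sInf_le (Or.inl ⟨hx, h⟩)⟩
  rcases blockCut_mem (a := a) (i := i) (P := P) with h | h
  · exact hP _ x h.1.1 hcut hx.2 h.2
  · have := hx.2; rw [Set.mem_singleton_iff.mp h] at hcut; omega

theorem blockCut_eq {c : ℕ} (hb : blockStart a i ≤ c) (he : c ≤ blockStart a i + a i)
    (h : ∀ x, inBlock a i x → (P x ↔ c ≤ x)) : blockCut a i P = c := by
  refine le_antisymm ?_ (le_csInf ⟨_, Or.inr rfl⟩ ?_)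
  · rcases he.lt_or_eq with he | he
    · exact Nat.sInf_le (Or.inl ⟨⟨hb, he⟩, (h c ⟨hb, he⟩).mpr le_rfl⟩)
    · exact he ▸ blockCut_le
  · rintro x (hx | hx)
    · exact (h x hx.1).mp hx.2
    · rwa [Set.mem_singleton_iff.mp hx]

/-- For an ascending block `i`, the position at which the fixed points of `π` in it start. -/
noncomputable def fixStart (a : Fin k → ℕ) (i : Fin k) (π : Perm (Fin N)) : ℕ :=
  blockCut a i fun x => x ≤ appl π x

/-- On block `i`, `ρ` moves the points before `s` down, fixes `[s, s + q)` and moves the rest up. -/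
structure BlockProfile (a : Fin k → ℕ) (i : Fin k) (ρ : Perm (Fin N)) (s q : ℕ) : Prop where
  start_le : blockStart a i ≤ s
  le_end : s + q ≤ blockStart a i + a i
  lt_iff : ∀ x, inBlock a i x → (appl ρ x < x ↔ x < s)
  le_iff : ∀ x, inBlock a i x → (appl ρ x ≤ x ↔ x < s + q)

variable {s q : ℕ}

theorem BlockProfile.appl_eq {ρ : Perm (Fin N)} (h : BlockProfile a i ρ s q) {x : ℕ}
    (h1 : s ≤ x) (h2 : x < s + q) : appl ρ x = x := by
  have hx : inBlock a i x := ⟨h.start_le.trans h1, h2.trans_le h.le_end⟩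
  have := h.lt_iff x hx; have := h.le_iff x hx; omega

theorem BlockProfile.fixStart_eq {ρ : Perm (Fin N)} (h : BlockProfile a i ρ s q) :
    fixStart a i ρ = s :=
  blockCut_eq h.start_le (by have := h.le_end; omega) fun x hx => by
    have := h.lt_iff x hx; omega

theorem BlockProfile.fixInBlock_eq {ρ : Perm (Fin (∑ t, a t))} (h : BlockProfile a i ρ s q) :
    fixInBlock a i ρ = q := by
  have hfix : ∀ x, inBlock a i x ∧ appl ρ x = x ↔ x ∈ Finset.Ico s (s + q) := fun x => by
    rw [Finset.mem_Ico]
    refine ⟨fun ⟨hx, he⟩ => ?_, fun ⟨h1, h2⟩ => ⟨?_, h.appl_eq h1 h2⟩⟩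
    · have := h.lt_iff x hx; have := h.le_iff x hx; omega
    · exact ⟨h.start_le.trans h1, h2.trans_le h.le_end⟩
  rw [fixInBlock, Nat.card_congr (Equiv.subtypeEquivRight hfix), Nat.card_eq_finsetCard,
    Nat.card_Ico, Nat.add_sub_cancel_left]

theorem IsASPerm.blockProfile {π : Perm (Fin (∑ t, a t))} (hπ : IsASPerm a S π) (hi : i ∉ S) :
    BlockProfile a i π (fixStart a i π) (fixInBlock a i π) := by
  set s := fixStart a i π
  set t := blockCut a i fun x => x < appl π x
  have hs : ∀ x, inBlock a i x → (s ≤ x ↔ x ≤ appl π x) := fun x =>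
    blockCut_le_iff fun x y hx hxy hy hP => by have := hπ.add_sub_le hi hx hxy hy; omega
  have ht : ∀ x, inBlock a i x → (t ≤ x ↔ x < appl π x) := fun x =>
    blockCut_le_iff fun x y hx hxy hy hP => by have := hπ.add_sub_le hi hx hxy hy; omega
  have hst : s ≤ t := by
    rcases (blockCut_le (a := a) (i := i)).lt_or_eq with hlt | heq
    · have hin : inBlock a i t := ⟨blockStart_le_blockCut, hlt⟩
      exact (hs t hin).mpr ((ht t hin).mp le_rfl).le
    · have : s ≤ _ := blockCut_le; omega
  have h : BlockProfile a i π s (t - s) :=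
    { start_le := blockStart_le_blockCut
      le_end := by have : t ≤ _ := blockCut_le; omega
      lt_iff := fun x hx => by have := hs x hx; omega
      le_iff := fun x hx => by have := ht x hx; omega }
  rwa [h.fixInBlock_eq]

end Profile

section Transfer

variable {k : ℕ} {a : Fin k → ℕ} {S : Finset (Fin k)} {i : Fin k} {s l q : ℕ}

theorem BlockProfile.add_le_sum {N : ℕ} {ρ : Perm (Fin N)} (h : BlockProfile a i ρ s q) :
    s + q ≤ ∑ t, a t :=
  h.le_end.trans (blockStart_add_le_sum a i)

theorem blockProfile_deleteFixed (hn : ∑ t, update a i (a i - l) t + l = ∑ t, a t)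
    {π : Perm (Fin (∑ t, a t))} (h : BlockProfile a i π s q) (hlq : l ≤ q) :
    BlockProfile (update a i (a i - l)) i (deleteFixed s l hn π) s (q - l) := by
  have hb : blockStart (update a i (a i - l)) i = blockStart a i := blockStart_update_of_le _ le_rfl
  have hbs := h.start_le
  have hse := h.le_end
  have hs : s ≤ ∑ t, update a i (a i - l) t := by have := h.add_le_sum; omega
  have hfix : ∀ u, s ≤ u → u < s + l → appl π u = u := fun u h1 h2 => h.appl_eq h1 (by omega)
  have key : ∀ y, inBlock (update a i (a i - l)) i y →
      openGap s l (appl (deleteFixed s l hn π) y) = appl π (openGap s l y) := fun y hy =>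
    openGap_appl_deleteFixed hn hs hfix (hy.2.trans_le (blockStart_add_le_sum _ i))
  have hin : ∀ {y}, inBlock (update a i (a i - l)) i y → inBlock a i (openGap s l y) :=
    inBlock_openGap (by omega) hbs (by omega)
  refine ⟨hb ▸ hbs, by rw [hb, update_self]; omega, fun y hy => ?_, fun y hy => ?_⟩
  · rw [← openGap_strictMono.lt_iff_lt, key y hy, h.lt_iff _ (hin hy)]
    unfold openGap; split_ifs <;> omega
  · rw [← openGap_strictMono.le_iff_le, key y hy, h.le_iff _ (hin hy)]
    unfold openGap; split_ifs <;> omega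

theorem blockProfile_insertFixed (hn : ∑ t, update a i (a i - l) t + l = ∑ t, a t)
    {σ : Perm (Fin (∑ t, update a i (a i - l) t))}
    (h : BlockProfile (update a i (a i - l)) i σ s q) (hl : l ≤ a i) :
    BlockProfile a i (insertFixed s l hn σ) s (q + l) := by
  have hb : blockStart (update a i (a i - l)) i = blockStart a i := blockStart_update_of_le _ le_rfl
  have hbs : blockStart a i ≤ s := hb ▸ h.start_le
  have hse : s + q ≤ blockStart a i + (a i - l) := by
    have := h.le_end; rwa [hb, update_self] at this
  have hs : s ≤ ∑ t, update a i (a i - l) t := by have := h.add_le_sum; omega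
  refine ⟨hbs, by omega, fun x hx => ?_, fun x hx => ?_⟩ <;>
  · by_cases hgap : s ≤ x ∧ x < s + l
    · rw [appl_insertFixed_of_mem hn σ hgap.1 hgap.2]; omega
    have hy := inBlock_closeGap hl hbs (by omega) hx hgap
    rw [appl_insertFixed_of_notMem hn hs σ (hx.2.trans_le (blockStart_add_le_sum a i)) hgap]
    obtain ⟨y, rfl⟩ : ∃ y, openGap s l y = x := ⟨_, openGap_closeGap hgap⟩
    rw [closeGap_openGap] at hy ⊢
    first
    | rw [openGap_strictMono.lt_iff_lt, h.lt_iff y hy]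
    | rw [openGap_strictMono.le_iff_le, h.le_iff y hy]
    unfold openGap; split_ifs <;> omega

theorem isASPerm_deleteFixed (hn : ∑ t, update a i (a i - l) t + l = ∑ t, a t)
    {π : Perm (Fin (∑ t, a t))} (hπ : IsASPerm a S π) (hl : l ≤ a i)
    (hbs : blockStart a i ≤ s) (hse : s + l ≤ blockStart a i + a i)
    (hfix : ∀ u, s ≤ u → u < s + l → appl π u = u) :
    IsASPerm (update a i (a i - l)) S (deleteFixed s l hn π) := by
  intro j y hy1 hy2
  have hs : s ≤ ∑ t, update a i (a i - l) t := by have := blockStart_add_le_sum a i; omega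
  have key : ∀ y, y < ∑ t, update a i (a i - l) t →
      openGap s l (appl (deleteFixed s l hn π) y) = appl π (openGap s l y) :=
    fun y => openGap_appl_deleteFixed hn hs hfix
  have hyn : y + 1 < ∑ t, update a i (a i - l) t :=
    hy2.trans_le (blockStart_add_le_sum _ j)
  have h1 := inBlock_openGap hl hbs hse (y := y) ⟨hy1, by omega⟩
  have h2 := inBlock_openGap hl hbs hse (y := y + 1) ⟨by omega, hy2⟩
  have hlt := hπ.ite_lt_of_lt j h1.1 (openGap_strictMono (lt_add_one y)) h2.2
  rw [← key y (by omega), ← key (y + 1) hyn] at hlt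
  simpa only [openGap_strictMono.lt_iff_lt] using hlt

theorem isASPerm_insertFixed (hn : ∑ t, update a i (a i - l) t + l = ∑ t, a t)
    {σ : Perm (Fin (∑ t, update a i (a i - l) t))}
    (hσ : IsASPerm (update a i (a i - l)) S σ) (hi : i ∉ S)
    (h : BlockProfile (update a i (a i - l)) i σ s q) (hl : l ≤ a i) :
    IsASPerm a S (insertFixed s l hn σ) := by
  intro j x hx1 hx2
  have hb : blockStart (update a i (a i - l)) i = blockStart a i := blockStart_update_of_le _ le_rfl
  have hbs : blockStart a i ≤ s := hb ▸ h.start_le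
  have hse : s + q ≤ blockStart a i + (a i - l) := by
    have := h.le_end; rwa [hb, update_self] at this
  have hs : s ≤ ∑ t, update a i (a i - l) t := by have := h.add_le_sum; omega
  have hxN : x + 1 < ∑ t, a t := hx2.trans_le (blockStart_add_le_sum a j)
  by_cases hgap : ¬ (s ≤ x ∧ x < s + l) ∧ ¬ (s ≤ x + 1 ∧ x + 1 < s + l)
  · have hy := inBlock_closeGap hl hbs (by omega) (x := x) ⟨hx1, by omega⟩ hgap.1
    have hy' := inBlock_closeGap hl hbs (by omega) (x := x + 1) ⟨by omega, hx2⟩ hgap.2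
    have hlt := hσ.ite_lt_of_lt j hy.1 (closeGap_lt_closeGap (lt_add_one x) hgap.1 hgap.2) hy'.2
    rw [appl_insertFixed_of_notMem hn hs σ (by omega) hgap.1,
      appl_insertFixed_of_notMem hn hs σ hxN hgap.2]
    split_ifs at hlt ⊢ <;> exact openGap_strictMono hlt
  · have hj : j = i := by
      rw [not_and_or, not_not, not_not] at hgap
      rcases hgap with hgap | hgap
      · exact eq_of_inBlock a ⟨hx1, by omega⟩ ⟨by omega, by omega⟩
      · exact eq_of_inBlock a ⟨by omega, hx2⟩ ⟨by omega, by omega⟩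
    subst hj
    have hp := blockProfile_insertFixed hn h hl
    have := hp.lt_iff (x + 1) ⟨by omega, hx2⟩
    have := hp.le_iff x ⟨hx1, by omega⟩
    rw [if_neg hi]
    omega

end Transfer

/-- For `i ∉ S` (an ascending block) and `0 ≤ l ≤ p ≤ aᵢ`, there is a bijection
between `(a₁,…,aᵢ,…,a_k,S)`-permutations with exactly `p` fixed points in `Aᵢ` and
`(a₁,…,aᵢ-l,…,a_k,S)`-permutations with exactly `p - l` fixed points in `Aᵢ`. -/
theorem ascending_block_fixed_point_bijection (k : ℕ) (a : Fin k → ℕ)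
    (S : Finset (Fin k)) (i : Fin k) (hi : i ∉ S) (l p : ℕ) (hlp : l ≤ p)
    (hpa : p ≤ a i) :
    Nonempty
      ({π : Equiv.Perm (Fin (∑ t, a t)) // IsASPerm a S π ∧ fixInBlock a i π = p} ≃
       {π : Equiv.Perm (Fin (∑ t, Function.update a i (a i - l) t)) //
          IsASPerm (Function.update a i (a i - l)) S π ∧
          fixInBlock (Function.update a i (a i - l)) i π = p - l}) := by
  have hla : l ≤ a i := hlp.trans hpa
  have hn := sum_update_sub_add hla
  have hprof {π} (hπ : IsASPerm a S π) (hp : fixInBlock a i π = p) :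
      BlockProfile a i π (fixStart a i π) p := hp ▸ hπ.blockProfile hi
  have hprof' {σ} (hσ : IsASPerm (update a i (a i - l)) S σ)
      (hq : fixInBlock (update a i (a i - l)) i σ = p - l) :
      BlockProfile (update a i (a i - l)) i σ (fixStart (update a i (a i - l)) i σ) (p - l) :=
    hq ▸ hσ.blockProfile hi
  refine ⟨{ toFun := fun π => ⟨deleteFixed (fixStart a i π.1) l hn π.1, ?_⟩
            invFun := fun σ => ⟨insertFixed (fixStart (update a i (a i - l)) i σ.1) l hn σ.1, ?_⟩
            left_inv := fun π => Subtype.ext ?_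
            right_inv := fun σ => Subtype.ext ?_ }⟩
  · have h := hprof π.2.1 π.2.2
    exact ⟨isASPerm_deleteFixed hn π.2.1 hla h.start_le (by have := h.le_end; omega)
      fun _ h1 h2 => h.appl_eq h1 (by omega), (blockProfile_deleteFixed hn h hlp).fixInBlock_eq⟩
  · have h := blockProfile_insertFixed hn (hprof' σ.2.1 σ.2.2) hla
    rw [Nat.sub_add_cancel hlp] at h
    exact ⟨isASPerm_insertFixed hn σ.2.1 hi (hprof' σ.2.1 σ.2.2) hla, h.fixInBlock_eq⟩
  · have h := hprof π.2.1 π.2.2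
    simp only [(blockProfile_deleteFixed hn h hlp).fixStart_eq]
    exact insertFixed_deleteFixed hn (by have := h.add_le_sum; omega) fun _ h1 h2 =>
      h.appl_eq h1 (by omega)
  · have h := hprof' σ.2.1 σ.2.2
    simp only [(blockProfile_insertFixed hn h hla).fixStart_eq]
    exact deleteFixed_insertFixed hn (by have := h.add_le_sum; omega) σ
end

section
/- The polynomial (1/(a_1!⋯a_k!)) Σ_{T ⊆ {1,…,n}} (−1)^{|T|} f_λ(|{1,…,n}\T|) ∏_{i=1}^k f_λ(|A_i ∩ T|) is constant as a polynomial in λ, and equals (1/(a_1!⋯a_k!)) Σ_{π ∈ S_n} c(π). -/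
/-- The `i`-th block as a finset of `Fin n`. -/
def blockFin {k : ℕ} (a : Fin k → ℕ) (i : Fin k) : Finset (Fin (∑ t, a t)) :=
  Finset.univ.filter (fun x => inBlock a i (x : ℕ))

/-- The small cycles of `π` of length `≥ 2`. -/
def smallCycles {k : ℕ} (a : Fin k → ℕ) (π : Equiv.Perm (Fin (∑ t, a t))) :
    Finset (Equiv.Perm (Fin (∑ t, a t))) :=
  π.cycleFactorsFinset.filter (fun c => ∃ i, ∀ x ∈ c.support, inBlock a i (x : ℕ))

/-- `c(π)`: zero if `π` has an odd-length small cycle (in particular, a fixed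
point), and `2^m` otherwise, `m` being the number of small cycles. -/
def cWeight {k : ℕ} (a : Fin k → ℕ) (π : Equiv.Perm (Fin (∑ t, a t))) : ℕ :=
  if (∃ x, π x = x) ∨ ∃ c ∈ smallCycles a π, Odd c.support.card then 0
  else 2 ^ (smallCycles a π).card

/-- `f_λ(m) = ∑_{σ ∈ S_m} λ^{fix(σ)}`, the generating polynomial of permutations
of `{1,…,m}` by number of fixed points. -/
noncomputable def fpol (m : ℕ) : Polynomial ℚ :=
  ∑ σ : Equiv.Perm (Fin m), Polynomial.X ^ (Nat.card {x : Fin m // σ x = x})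

/-!
Expanding every `f_λ` as a sum over permutations, `f_λ(|Tᶜ|) ∏ᵢ f_λ(|Aᵢ ∩ T|)` becomes the sum
of `λ^fix(π)` over the permutations `π` preserving `Tᶜ` and every `Aᵢ ∩ T`. Exchanging the two
sums, the coefficient of `λ^fix(π)` is `∑ (-1)^|T|` over the `T` that are unions of small cycles of
`π`, fixed points included. If `π` fixes some `x`, toggling `x` in `T` shows that this sum vanishes.
Otherwise `fix(π) = 0` and the sum factors as `∏ (1 + (-1)^|c|)` over the small cycles `c`, which
is `c(π)`.
-/

open Finset Equiv Polynomial

section FixedPoints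

variable {α ι : Type*}

theorem fpol_card (β : Type*) [Fintype β] [DecidableEq β] :
    fpol (Fintype.card β) = ∑ σ : Perm β, (X : ℚ[X]) ^ Nat.card {x // σ x = x} := by
  let e := Fintype.equivFin β
  refine Fintype.sum_equiv e.permCongr.symm _
    (fun σ : Perm β => (X : ℚ[X]) ^ Nat.card {x // σ x = x}) fun σ => ?_
  congr 1
  exact Nat.card_congr <| e.symm.subtypeEquiv fun x => by simp [Equiv.permCongr_apply]

def permFiberEquiv (f : α → ι) : {g : Perm α // f ∘ g = f} ≃ ∀ i, Perm {a // f a = i} :=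
  (Equiv.subtypeEquiv DomMulAct.mk fun _ => DomMulAct.mem_stabilizer_iff.symm).trans
    (MulOpposite.opEquiv.trans (DomMulAct.stabilizerMulEquiv f).toEquiv)

theorem card_fixedPoints_eq_sum_fiber [Fintype α] [Fintype ι] (f : α → ι)
    (g : {g : Perm α // f ∘ g = f}) :
    Nat.card {x // g.1 x = x} = ∑ i, Nat.card {x // permFiberEquiv f g i x = x} := by
  rw [← Nat.card_sigma]
  exact Nat.card_congr
    { toFun x := ⟨f x, ⟨x, rfl⟩, Subtype.ext x.2⟩
      invFun p := ⟨p.2.1, congrArg Subtype.val p.2.2⟩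
      left_inv _ := rfl
      right_inv := by rintro ⟨_, ⟨x, rfl⟩, _⟩; rfl }

theorem prod_fpol_card_fiber [Fintype α] [DecidableEq α] [Fintype ι] [DecidableEq ι]
    (f : α → ι) :
    ∏ i, fpol (Fintype.card {a // f a = i}) =
      ∑ g ∈ univ.filter (fun g : Perm α => f ∘ g = f), X ^ Nat.card {x // g x = x} := by
  simp_rw [fpol_card, Fintype.prod_sum, Finset.prod_pow_eq_pow_sum]
  rw [← Finset.sum_subtype_eq_sum_filter, Finset.subtype_univ]
  exact (Fintype.sum_equiv (permFiberEquiv f) _ _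
    fun g => by rw [card_fixedPoints_eq_sum_fiber]).symm

end FixedPoints

section SignSums

variable {α ι R : Type*} [DecidableEq α] [CommRing R]

theorem sum_powerset_neg_one_pow_card_biUnion {C : Finset ι} {s : ι → Finset α}
    (hs : (C : Set ι).PairwiseDisjoint s) :
    ∑ D ∈ C.powerset, (-1 : R) ^ (D.biUnion s).card = ∏ c ∈ C, (1 + (-1) ^ (s c).card) := by
  rw [Finset.prod_one_add]
  refine Finset.sum_congr rfl fun D hD => ?_
  rw [Finset.prod_pow_eq_pow_sum, Finset.card_biUnion (hs.subset (mem_powerset.mp hD))]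

theorem injOn_biUnion_powerset {C : Finset ι} {s : ι → Finset α}
    (hs : (C : Set ι).PairwiseDisjoint s) (hne : ∀ c ∈ C, (s c).Nonempty) :
    Set.InjOn (fun D : Finset ι => D.biUnion s) C.powerset := by
  have key : ∀ D ⊆ C, ∀ D' ⊆ C, D.biUnion s = D'.biUnion s → D ⊆ D' := by
    intro D hD D' hD' h c hc
    obtain ⟨x, hx⟩ := hne c (hD hc)
    obtain ⟨c', hc', hxc'⟩ := mem_biUnion.mp (h ▸ mem_biUnion.mpr ⟨c, hc, hx⟩)
    rwa [hs.elim_finset (hD hc) (hD' hc') x hx hxc']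
  intro D hD D' hD' h
  simp only [coe_powerset, Set.mem_preimage, Set.mem_powerset_iff, coe_subset] at hD hD'
  exact (key D hD D' hD' h).antisymm (key D' hD' D hD h.symm)

theorem sum_neg_one_pow_card_eq_zero_of_toggle {S : Finset (Finset α)} (x : α)
    (hS : ∀ T ∈ S, (if x ∈ T then T.erase x else insert x T) ∈ S) :
    ∑ T ∈ S, (-1 : R) ^ T.card = 0 := by
  refine Finset.sum_involution (fun T _ => if x ∈ T then T.erase x else insert x T)
    (fun T _ => ?_) (fun T _ _ => ?_) hS (fun T _ => ?_)
  · split_ifs with h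
    · rw [← Finset.card_erase_add_one h, pow_succ]; ring
    · rw [Finset.card_insert_of_notMem h, pow_succ]; ring
  · split_ifs with h
    · exact fun he => Finset.notMem_erase x T (he.symm ▸ h)
    · exact fun he => h (he ▸ Finset.mem_insert_self x T)
  · by_cases h : x ∈ T <;> simp [h]

end SignSums

section Blocks

variable {k : ℕ} (a : Fin k → ℕ)

theorem blockStart_eq_sum_castLE (i : Fin k) :
    blockStart a i = ∑ j : Fin i, a (Fin.castLE i.2.le j) := by
  rw [blockStart]
  convert Finset.sum_map univ (Fin.castLEEmb i.2.le) a using 2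
  · ext t
    simp only [mem_Iio, mem_map, mem_univ, true_and, Fin.castLEEmb_apply]
    exact ⟨fun h => ⟨⟨t, h⟩, rfl⟩, by rintro ⟨j, rfl⟩; exact j.2⟩
  · rfl

theorem val_finSigmaFinEquiv (p : (i : Fin k) × Fin (a i)) :
    (finSigmaFinEquiv p : ℕ) = blockStart a p.1 + p.2 := by
  rw [finSigmaFinEquiv_apply, blockStart_eq_sum_castLE]

def blockOf (x : Fin (∑ t, a t)) : Fin k := (finSigmaFinEquiv.symm x).1

variable {a}

theorem blockOf_eq_iff {x : Fin (∑ t, a t)} {i : Fin k} : blockOf a x = i ↔ inBlock a i x := by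
  constructor
  · rintro rfl
    obtain ⟨p, rfl⟩ := finSigmaFinEquiv.surjective x
    simp only [blockOf, Equiv.symm_apply_apply, inBlock, val_finSigmaFinEquiv]
    omega
  · rintro ⟨h₁, h₂⟩
    have hx : finSigmaFinEquiv ⟨i, ⟨x - blockStart a i, by omega⟩⟩ = x := by
      ext; rw [val_finSigmaFinEquiv]; dsimp only; omega
    rw [blockOf, ← hx, Equiv.symm_apply_apply]

theorem mem_blockFin {x : Fin (∑ t, a t)} {i : Fin k} : x ∈ blockFin a i ↔ blockOf a x = i := by
  rw [blockOf_eq_iff, blockFin, mem_filter, and_iff_right (mem_univ x)]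

end Blocks

section Cells

variable {k : ℕ} {a : Fin k → ℕ}

variable (a) in
def cellOf (T : Finset (Fin (∑ t, a t))) (x : Fin (∑ t, a t)) : Option (Fin k) :=
  if x ∈ T then some (blockOf a x) else none

theorem cellOf_eq_none_iff {T : Finset (Fin (∑ t, a t))} {x : Fin (∑ t, a t)} :
    cellOf a T x = none ↔ x ∉ T := by
  unfold cellOf; split_ifs with h <;> simp [h]

theorem cellOf_eq_some_iff {T : Finset (Fin (∑ t, a t))} {x : Fin (∑ t, a t)} {i : Fin k} :
    cellOf a T x = some i ↔ x ∈ T ∧ blockOf a x = i := by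
  unfold cellOf; split_ifs with h <;> simp [h]

theorem card_cellOf_eq_none (T : Finset (Fin (∑ t, a t))) :
    Fintype.card {x // cellOf a T x = none} = Tᶜ.card := by
  rw [Fintype.card_subtype]
  congr 1
  ext x
  simp [cellOf_eq_none_iff]

theorem card_cellOf_eq_some (T : Finset (Fin (∑ t, a t))) (i : Fin k) :
    Fintype.card {x // cellOf a T x = some i} = (blockFin a i ∩ T).card := by
  rw [Fintype.card_subtype]
  congr 1
  ext x
  simp [cellOf_eq_some_iff, mem_blockFin, and_comm]

theorem fpol_mul_prod_fpol_eq_sum (T : Finset (Fin (∑ t, a t))) :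
    fpol Tᶜ.card * ∏ i, fpol (blockFin a i ∩ T).card =
      ∑ g ∈ univ.filter (fun g : Perm _ => cellOf a T ∘ g = cellOf a T),
        X ^ Nat.card {x // g x = x} := by
  simp_rw [← prod_fpol_card_fiber, Fintype.prod_option, card_cellOf_eq_none, card_cellOf_eq_some]

theorem cellOf_comp_eq_iff {T : Finset (Fin (∑ t, a t))} {π : Perm (Fin (∑ t, a t))} :
    cellOf a T ∘ π = cellOf a T ↔
      ∀ x, (π x ∈ T ↔ x ∈ T) ∧ (x ∈ T → blockOf a (π x) = blockOf a x) := by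
  simp only [funext_iff, Function.comp_apply, cellOf]
  refine forall_congr' fun x => ?_
  by_cases hx : x ∈ T <;> by_cases hπx : π x ∈ T <;> simp [hx, hπx]

end Cells

section StableSets

variable {k : ℕ} {a : Fin k → ℕ} {π : Perm (Fin (∑ t, a t))}

theorem cellOf_comp_eq_of_subset_smallCycles {D : Finset (Perm (Fin (∑ t, a t)))}
    (hD : D ⊆ smallCycles a π) :
    cellOf a (D.biUnion Perm.support) ∘ π = cellOf a (D.biUnion Perm.support) := by
  refine cellOf_comp_eq_iff.mpr fun x => ⟨?_, ?_⟩
  · simp only [mem_biUnion]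
    exact exists_congr fun c => and_congr_right fun hc =>
      Perm.mem_cycleFactorsFinset_support (mem_filter.mp (hD hc)).1 x
  · simp only [mem_biUnion]
    rintro ⟨c, hc, hx⟩
    obtain ⟨hcπ, i, hi⟩ := mem_filter.mp (hD hc)
    rw [blockOf_eq_iff.mpr (hi x hx),
      blockOf_eq_iff.mpr (hi _ ((Perm.mem_cycleFactorsFinset_support hcπ x).mpr hx))]

theorem biUnion_support_eq_of_cellOf_comp_eq {T : Finset (Fin (∑ t, a t))}
    (hπ : ∀ x, π x ≠ x) (hT : cellOf a T ∘ π = cellOf a T) :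
    ((smallCycles a π).filter (·.support ⊆ T)).biUnion Perm.support = T := by
  refine (biUnion_subset.mpr fun c hc => (mem_filter.mp hc).2).antisymm fun x hx => ?_
  have hxπ : x ∈ π.support := Perm.mem_support.mpr (hπ x)
  have horbit : ∀ y ∈ (π.cycleOf x).support, y ∈ T ∧ blockOf a y = blockOf a x := by
    intro y hy
    obtain ⟨m, -, rfl⟩ := (Perm.mem_support_cycleOf_iff.mp hy).1.exists_pow_eq'
    rw [← cellOf_eq_some_iff, Perm.coe_pow, ← Function.comp_apply (f := cellOf a T),
      Function.iterate_invariant hT, cellOf_eq_some_iff]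
    exact ⟨hx, rfl⟩
  have hsmall : π.cycleOf x ∈ smallCycles a π :=
    mem_filter.mpr ⟨Perm.cycleOf_mem_cycleFactorsFinset_iff.mpr hxπ,
      blockOf a x, fun y hy => blockOf_eq_iff.mp (horbit y hy).2⟩
  exact mem_biUnion.mpr ⟨_, mem_filter.mpr ⟨hsmall, fun y hy => (horbit y hy).1⟩,
    Perm.mem_support_cycleOf_iff.mpr ⟨Perm.SameCycle.refl _ _, hxπ⟩⟩

end StableSets

section SignedCount

variable {k : ℕ} {a : Fin k → ℕ} {π : Perm (Fin (∑ t, a t))}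

theorem sum_neg_one_pow_card_of_apply_eq_self {R : Type*} [CommRing R] {x : Fin (∑ t, a t)}
    (hx : π x = x) :
    ∑ T ∈ univ.filter (fun T => cellOf a T ∘ π = cellOf a T), (-1 : R) ^ T.card = 0 := by
  refine sum_neg_one_pow_card_eq_zero_of_toggle x fun T hT => ?_
  have hmem : ∀ y ≠ x, (y ∈ (if x ∈ T then T.erase x else insert x T) ↔ y ∈ T) := by
    intro y hy
    split_ifs <;> simp [hy]
  refine mem_filter.mpr ⟨mem_univ _, cellOf_comp_eq_iff.mpr fun y => ?_⟩
  rcases eq_or_ne y x with rfl | hy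
  · simp [hx]
  · have hπy : π y ≠ x := fun h => hy (π.injective (h.trans hx.symm))
    rw [hmem y hy, hmem _ hπy]
    exact cellOf_comp_eq_iff.mp (mem_filter.mp hT).2 y

theorem sum_neg_one_pow_card_of_forall_apply_ne {R : Type*} [CommRing R] (hπ : ∀ x, π x ≠ x) :
    ∑ T ∈ univ.filter (fun T => cellOf a T ∘ π = cellOf a T), (-1 : R) ^ T.card =
      ∏ c ∈ smallCycles a π, (1 + (-1) ^ c.support.card) := by
  have hdisj : (smallCycles a π : Set (Perm _)).PairwiseDisjoint Perm.support :=
    fun c hc d hd hcd => (Perm.cycleFactorsFinset_pairwise_disjoint π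
      (mem_filter.mp hc).1 (mem_filter.mp hd).1 hcd).disjoint_support
  have hne : ∀ c ∈ smallCycles a π, c.support.Nonempty :=
    fun c hc => (Perm.mem_cycleFactorsFinset_iff.mp (mem_filter.mp hc).1).1.nonempty_support
  have himage : univ.filter (fun T => cellOf a T ∘ π = cellOf a T) =
      (smallCycles a π).powerset.image (·.biUnion Perm.support) := by
    ext T
    simp only [mem_filter, mem_univ, true_and, mem_image, mem_powerset]
    refine ⟨fun hT => ⟨_, filter_subset _ _, biUnion_support_eq_of_cellOf_comp_eq hπ hT⟩, ?_⟩
    rintro ⟨D, hD, rfl⟩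
    exact cellOf_comp_eq_of_subset_smallCycles hD
  rw [himage, sum_image (injOn_biUnion_powerset hdisj hne),
    sum_powerset_neg_one_pow_card_biUnion hdisj]

theorem cWeight_eq_prod (hπ : ∀ x, π x ≠ x) :
    (cWeight a π : ℚ) = ∏ c ∈ smallCycles a π, (1 + (-1) ^ c.support.card) := by
  by_cases hodd : ∃ c ∈ smallCycles a π, Odd c.support.card
  · obtain ⟨c, hc, hc_odd⟩ := hodd
    rw [cWeight, if_pos (Or.inr ⟨c, hc, hc_odd⟩), prod_eq_zero hc (by simp [hc_odd.neg_one_pow])]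
    simp
  · push Not at hodd
    rw [cWeight, if_neg (by simpa [hπ] using hodd), Nat.cast_pow, ← prod_const]
    refine prod_congr rfl fun c hc => ?_
    rw [(Nat.not_odd_iff_even.mp (hodd c hc)).neg_one_pow]
    norm_num

theorem sum_neg_one_pow_card_eq_cWeight (π : Perm (Fin (∑ t, a t))) :
    ∑ T ∈ univ.filter (fun T => cellOf a T ∘ π = cellOf a T), (-1 : ℚ) ^ T.card = cWeight a π := by
  by_cases h : ∃ x, π x = x
  · obtain ⟨x, hx⟩ := h
    rw [sum_neg_one_pow_card_of_apply_eq_self hx, cWeight, if_pos (Or.inl ⟨x, hx⟩), Nat.cast_zero]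
  · push Not at h
    rw [sum_neg_one_pow_card_of_forall_apply_ne h, cWeight_eq_prod h]

end SignedCount

theorem C_cWeight_mul_X_pow {k : ℕ} {a : Fin k → ℕ} (π : Perm (Fin (∑ t, a t))) :
    C (cWeight a π : ℚ) * X ^ Nat.card {x // π x = x} = C (cWeight a π : ℚ) := by
  by_cases h : ∃ x, π x = x
  · simp [cWeight, h]
  · have : IsEmpty {x // π x = x} := ⟨fun x => h ⟨x, x.2⟩⟩
    simp

/-- The polynomial
`(1/(a₁!⋯a_k!)) ∑_{T ⊆ {1,…,n}} (-1)^{|T|} f_λ(|{1,…,n}\T|) ∏ᵢ f_λ(|Aᵢ ∩ T|)`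
is constant in `λ`, equal to `(1/(a₁!⋯a_k!)) ∑_{π ∈ S_n} c(π)`. -/
theorem polynomial_sum_constant (k : ℕ) (a : Fin k → ℕ) :
    (∏ i, ((a i).factorial : ℚ))⁻¹ •
      ∑ T : Finset (Fin (∑ t, a t)),
        (-1 : Polynomial ℚ) ^ T.card * fpol Tᶜ.card *
          ∏ i, fpol ((blockFin a i ∩ T).card)
    = Polynomial.C ((∏ i, ((a i).factorial : ℚ))⁻¹ *
        ∑ π : Equiv.Perm (Fin (∑ t, a t)), (cWeight a π : ℚ)) := by
  have expand (T : Finset (Fin (∑ t, a t))) :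
      (-1 : ℚ[X]) ^ T.card * fpol Tᶜ.card * ∏ i, fpol (blockFin a i ∩ T).card =
        ∑ π ∈ univ.filter (fun π : Perm _ => cellOf a T ∘ π = cellOf a T),
          C ((-1 : ℚ) ^ T.card) * X ^ Nat.card {x // π x = x} := by
    rw [mul_assoc, fpol_mul_prod_fpol_eq_sum, mul_sum]
    simp
  have collapse (π : Perm (Fin (∑ t, a t))) :
      ∑ T ∈ univ.filter (fun T => cellOf a T ∘ π = cellOf a T),
        C ((-1 : ℚ) ^ T.card) * X ^ Nat.card {x // π x = x} = C (cWeight a π : ℚ) := by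
    rw [← sum_mul, ← map_sum, sum_neg_one_pow_card_eq_cWeight, C_cWeight_mul_X_pow]
  rw [sum_congr rfl fun T _ => expand T,
    sum_comm' (t' := univ)
      (s' := fun π : Perm _ => univ.filter fun T => cellOf a T ∘ π = cellOf a T) (by simp),
    sum_congr rfl fun π _ => collapse π, ← map_sum, smul_C, smul_eq_mul]
end
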